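/- Let μ_S be Lebesgue measure on ℝ restricted to (−1, 0) and μ_T be Lebesgue measure on ℝ restricted to (1, 2). Define g : ℝ → ℝ by g(x) = x + 1 if x ≤ 0 and g(x) = x − 1 if x > 0; define f_S : ℝ → {0,1} by f_S(x) = 0 if x ≤ −1/2 and f_S(x) = 1 if x > −1/2; define f_T : ℝ → {0,1} by f_T(x) = 0 if x ≥ 3/2 and f_T(x) = 1 if x < 3/2. Then for every measurable function h : ℝ → {0,1}: E_{x∼μ_S}[|h(g(x)) − f_S(x)|] + E_{x∼μ_T}[|h(g(x)) − f_T(x)|] = 1. -/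

import Mathlib

open MeasureTheory Set

/-- The piecewise-linear transformation `g(x) = x + 1` for `x ≤ 0` and
`g(x) = x − 1` for `x > 0`. -/
noncomputable def gEx : ℝ → ℝ := fun x => if x ≤ 0 then x + 1 else x - 1

/-- The source labeling function: `f_S(x) = 0` if `x ≤ −1/2`, `f_S(x) = 1` if `x > −1/2`. -/
noncomputable def fSEx : ℝ → ℝ := fun x => if x ≤ -(1 / 2 : ℝ) then 0 else 1

/-- The target labeling function: `f_T(x) = 0` if `x ≥ 3/2`, `f_T(x) = 1` if `x < 3/2`. -/
noncomputable def fTEx : ℝ → ℝ := fun x => if (3 / 2 : ℝ) ≤ x then 0 else 1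

/-!
Translating the source interval `(-1, 0)` by `+1` and the target interval `(1, 2)` by `-1`, both
become `(0, 1)`, on which `g` is the identity. There the translated labels are complementary,
`f_S(y - 1) = 1 - f_T(y + 1)` for `y ≠ 1/2`, and for `a ∈ [0, 1]` and `c ∈ {0, 1}` we have
`|a - c| + |a - (1 - c)| = |a| + |a - 1| = 1`. So the two errors add up pointwise almost
everywhere to `1`, whose integral over `(0, 1)` is `1`.
-/

theorem setIntegral_Ioo_comp_add_right {E : Type*} [NormedAddCommGroup E] [NormedSpace ℝ E]
    (f : ℝ → E) (a b d : ℝ) :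
    ∫ x in Ioo (a - d) (b - d), f (x + d) = ∫ x in Ioo a b, f x := by
  rw [← preimage_add_const_Ioo]
  exact (measurePreserving_add_right volume d).setIntegral_preimage_emb
    (measurableEmbedding_addRight d) f _

theorem mem_Icc_of_eq_zero_or_one {a : ℝ} (ha : a = 0 ∨ a = 1) : a ∈ Icc (0 : ℝ) 1 := by
  rcases ha with rfl | rfl <;> simp

theorem abs_sub_add_abs_sub_eq_one {a b c : ℝ} (ha : a ∈ Icc (0 : ℝ) 1)
    (hb : b = 0 ∨ b = 1) (hbc : b + c = 1) : |a - b| + |a - c| = 1 := by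
  obtain ⟨ha₀, ha₁⟩ := ha
  obtain rfl | rfl := hb
  · obtain rfl : c = 1 := by linarith
    rw [abs_of_nonneg (by linarith), abs_of_nonpos (by linarith)]; ring
  · obtain rfl : c = 0 := by linarith
    rw [abs_of_nonpos (by linarith), abs_of_nonneg (by linarith)]; ring

theorem gEx_sub_one {y : ℝ} (hy : y ≤ 1) : gEx (y - 1) = y := by
  rw [gEx, if_pos (by linarith)]; ring

theorem gEx_add_one {y : ℝ} (hy : -1 < y) : gEx (y + 1) = y := by
  rw [gEx, if_neg (by linarith)]; ring

theorem fSEx_eq_zero_or_one (x : ℝ) : fSEx x = 0 ∨ fSEx x = 1 := by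
  unfold fSEx; split_ifs <;> simp

theorem fTEx_eq_zero_or_one (x : ℝ) : fTEx x = 0 ∨ fTEx x = 1 := by
  unfold fTEx; split_ifs <;> simp

theorem fSEx_sub_one_add_fTEx_add_one {y : ℝ} (hy : y ≠ 1 / 2) :
    fSEx (y - 1) + fTEx (y + 1) = 1 := by
  unfold fSEx fTEx
  rcases hy.lt_or_gt with hy | hy
  · rw [if_pos (by linarith), if_neg (by linarith)]; norm_num
  · rw [if_neg (by linarith), if_pos (by linarith)]; norm_num

theorem measurable_fSEx : Measurable fSEx :=
  Measurable.ite (measurableSet_le measurable_id measurable_const) measurable_const measurable_const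

theorem measurable_fTEx : Measurable fTEx :=
  Measurable.ite (measurableSet_le measurable_const measurable_id) measurable_const measurable_const

theorem integrableOn_abs_sub_of_mem_Icc {h f : ℝ → ℝ} (hh : Measurable h) (hf : Measurable f)
    (hh_mem : ∀ z, h z ∈ Icc (0 : ℝ) 1) (hf_mem : ∀ z, f z ∈ Icc (0 : ℝ) 1) {a b : ℝ} :
    IntegrableOn (fun y => |h y - f y|) (Ioo a b) := by
  have : IsFiniteMeasure (volume.restrict (Ioo a b)) := by
    rw [isFiniteMeasure_restrict]; exact measure_Ioo_lt_top.ne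
  refine Integrable.of_bound (hh.sub hf).abs.aestronglyMeasurable 1 (ae_of_all _ fun y => ?_)
  rw [Real.norm_eq_abs, abs_abs]
  exact abs_sub_le_of_nonneg_of_le (hh_mem y).1 (hh_mem y).2 (hf_mem y).1 (hf_mem y).2

theorem stmt_14 (h : ℝ → ℝ) (hmeas : Measurable h) (hrange : ∀ z, h z = 0 ∨ h z = 1) :
    (∫ x, |h (gEx x) - fSEx x| ∂(volume.restrict (Ioo (-1 : ℝ) 0))) +
      (∫ x, |h (gEx x) - fTEx x| ∂(volume.restrict (Ioo (1 : ℝ) 2))) = 1 := by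
  have hS : ∫ x in Ioo (-1 : ℝ) 0, |h (gEx x) - fSEx x| =
      ∫ y in Ioo (0 : ℝ) 1, |h y - fSEx (y - 1)| := by
    rw [← setIntegral_Ioo_comp_add_right _ (-1) 0 (-1)]
    norm_num only [sub_neg_eq_add, neg_add_cancel, zero_add, ← sub_eq_add_neg]
    exact setIntegral_congr_fun measurableSet_Ioo fun y hy => by rw [gEx_sub_one hy.2.le]
  have hT : ∫ x in Ioo (1 : ℝ) 2, |h (gEx x) - fTEx x| =
      ∫ y in Ioo (0 : ℝ) 1, |h y - fTEx (y + 1)| := by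
    rw [← setIntegral_Ioo_comp_add_right _ 1 2 1]
    norm_num only [sub_self]
    exact setIntegral_congr_fun measurableSet_Ioo fun y hy => by
      rw [gEx_add_one (by linarith [hy.1])]
  have hsum : ∀ᵐ y ∂volume.restrict (Ioo (0 : ℝ) 1),
      |h y - fSEx (y - 1)| + |h y - fTEx (y + 1)| = 1 := by
    filter_upwards [ae_restrict_of_ae (compl_mem_ae_iff.mpr (measure_singleton (1 / 2 : ℝ)))]
      with y hy
    exact abs_sub_add_abs_sub_eq_one (mem_Icc_of_eq_zero_or_one (hrange y)) (fSEx_eq_zero_or_one _)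
      (fSEx_sub_one_add_fTEx_add_one hy)
  rw [hS, hT, ← integral_add, integral_congr_ae hsum]
  · simp
  · exact integrableOn_abs_sub_of_mem_Icc hmeas (measurable_fSEx.comp (measurable_sub_const 1))
      (fun z => mem_Icc_of_eq_zero_or_one (hrange z))
      (fun z => mem_Icc_of_eq_zero_or_one (fSEx_eq_zero_or_one _))
  · exact integrableOn_abs_sub_of_mem_Icc hmeas (measurable_fTEx.comp (measurable_add_const 1))
      (fun z => mem_Icc_of_eq_zero_or_one (hrange z))
      (fun z => mem_Icc_of_eq_zero_or_one (fTEx_eq_zero_or_one _))
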